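/- arXiv:2403.03852 — 2 statements merged into one kernel-verified Lean document; each statement's English description precedes it below -/
import Mathlib

section
/- For all large enough T, the learning-rate schedule β_1 = 1/T^{c_0}, β_t = (c_1 log T/T)·min{β_1(1+c_1 log T/T)^t, 1} for t > 1 satisfies: (i) α_t ≥ 1 − c_1 log T/T ≥ 1/2 for all 1 ≤ t ≤ T; (ii) (1/2)·(1−α_t)/(1−ᾱ_t) ≤ (1/2)·(1−α_t)/(α_t−ᾱ_t) ≤ (1−α_t)/(1−ᾱ_{t−1}) ≤ 4c_1 log T/T for all 2 ≤ t ≤ T; (iii) 1 ≤ (1−ᾱ_t)/(1−ᾱ_{t−1}) ≤ 1 + 4c_1 log T/T for all 2 ≤ t ≤ T. -/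
/-!
Formalization setup for "Accelerating Convergence of Score-Based Diffusion Models, Provably".

We work on `ℝ^d = EuclideanSpace ℝ (Fin d)`.  The data distribution is described by a
Lebesgue density `pdata`.  The forward process is `X_t = √ᾱ_t • X₀ + √(1-ᾱ_t) • W̄_t`,
whose density `q_t` is given by the explicit Gaussian convolution formula.  Samplers are
described as laws (measures) obtained by pushing the standard Gaussian `N(0, I_d)` through
the corresponding update maps.
-/

open MeasureTheory Real Filter
open scoped ENNReal NNReal BigOperators RealInnerProductSpace Topology

noncomputable section

namespace Paper

/-- `ℝ^d` with the Euclidean structure. -/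
abbrev Vec (d : ℕ) : Type := EuclideanSpace ℝ (Fin d)

variable {d : ℕ}

/-- Isotropic Gaussian density with per-coordinate variance `v` on `ℝ^d`. -/
def gaussPdf (d : ℕ) (v : ℝ) (x : Vec d) : ℝ :=
  (2 * π * v) ^ (-(d : ℝ) / 2) * Real.exp (-‖x‖ ^ 2 / (2 * v))

/-- The standard Gaussian measure `N(0, I_d)` on `ℝ^d`. -/
def stdGaussian (d : ℕ) : Measure (Vec d) :=
  volume.withDensity fun x => ENNReal.ofReal (gaussPdf d 1 x)

/-- The learning-rate schedule: `β₁ = 1/T^{c₀}` and, for `t > 1`,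
`β_t = (c₁ log T / T) · min{β₁ (1 + c₁ log T / T)^t, 1}`. -/
def beta (T : ℕ) (c0 c1 : ℝ) (t : ℕ) : ℝ :=
  if t ≤ 1 then 1 / (T : ℝ) ^ c0
  else c1 * Real.log T / T * min (1 / (T : ℝ) ^ c0 * (1 + c1 * Real.log T / T) ^ t) 1

/-- `α_t = 1 - β_t`. -/
def alpha (T : ℕ) (c0 c1 : ℝ) (t : ℕ) : ℝ := 1 - beta T c0 c1 t

/-- `ᾱ_t = ∏_{k=1}^t α_k`. -/
def alphaBar (T : ℕ) (c0 c1 : ℝ) (t : ℕ) : ℝ := ∏ k ∈ Finset.Icc 1 t, alpha T c0 c1 k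

/-- Density of `scale • X₀ + √v • W` when `X₀` has density `pdata` and `W ~ N(0, I_d)`. -/
def qGen (pdata : Vec d → ℝ) (scale v : ℝ) (x : Vec d) : ℝ :=
  ∫ x0, pdata x0 * gaussPdf d v (x - scale • x0)

/-- Density `q_t` of `X_t = √a • X₀ + √(1-a) • W̄`  (with `a = ᾱ_t`). -/
def qFun (pdata : Vec d → ℝ) (a : ℝ) (x : Vec d) : ℝ :=
  qGen pdata (Real.sqrt a) (1 - a) x

/-- Conditional density `p_{X₀|X_t}(x₀|x)`. -/
def condPdf (pdata : Vec d → ℝ) (a : ℝ) (x0 x : Vec d) : ℝ :=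
  pdata x0 * gaussPdf d (1 - a) (x - Real.sqrt a • x0) / qFun pdata a x

/-- The score function `s_t⋆ = ∇ log q_t`. -/
def scoreFun (pdata : Vec d → ℝ) (a : ℝ) (x : Vec d) : Vec d :=
  gradient (fun y => Real.log (qFun pdata a y)) x

/-- `g_t(x) = ∫ (x - √a • x₀) p_{X₀|X_t}(x₀|x) dx₀`. -/
def gFun (pdata : Vec d → ℝ) (a : ℝ) (x : Vec d) : Vec d :=
  ∫ x0, condPdf pdata a x0 x • (x - Real.sqrt a • x0)

/-- `J_t(x) = ∂/∂x (-(1-ᾱ_t) s_t⋆(x))`. -/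
def Jmat (pdata : Vec d → ℝ) (a : ℝ) (x : Vec d) : Vec d →L[ℝ] Vec d :=
  fderiv ℝ (fun y => -((1 - a) • scoreFun pdata a y)) x

/-- Total-variation distance between two densities: `½∫|f - g|`. -/
def tvFun (f g : Vec d → ℝ) : ℝ := (∫ x, |f x - g x|) / 2

/-- KL divergence between two densities: `∫ f log (f/g)`. -/
def klFun (f g : Vec d → ℝ) : ℝ := ∫ x, f x * Real.log (f x / g x)

/-- The Lebesgue density of a measure. -/
def densityOf (μ : Measure (Vec d)) (x : Vec d) : ℝ := (μ.rnDeriv volume x).toReal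

/-- `φ_t(x) = x - ((1-α_{t+1})/2) • s_t(x)`. -/
def phiMap (T : ℕ) (c0 c1 : ℝ) (s : ℕ → Vec d → Vec d) (t : ℕ) (x : Vec d) : Vec d :=
  x - ((1 - alpha T c0 c1 (t + 1)) / 2) • s t x

/-- `Φ_t(x) = √α_{t+1} • φ_t(x)` (the mid-point map of the accelerated ODE sampler). -/
def PhiMap (T : ℕ) (c0 c1 : ℝ) (s : ℕ → Vec d → Vec d) (t : ℕ) (x : Vec d) : Vec d :=
  Real.sqrt (alpha T c0 c1 (t + 1)) • phiMap T c0 c1 s t x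

/-- `ψ_t(x) = x + ((1-α_t)/2) s_t(x)
      + ((1-α_t)²/(4(1-α_{t+1}))) (s_t(x) - √α_{t+1} s_{t+1}(Φ_t(x)/√α_{t+1}))`. -/
def psiMap (T : ℕ) (c0 c1 : ℝ) (s : ℕ → Vec d → Vec d) (t : ℕ) (x : Vec d) : Vec d :=
  x + ((1 - alpha T c0 c1 t) / 2) • s t x +
    ((1 - alpha T c0 c1 t) ^ 2 / (4 * (1 - alpha T c0 c1 (t + 1)))) •
      (s t x - Real.sqrt (alpha T c0 c1 (t + 1)) • s (t + 1) (PhiMap T c0 c1 s t x))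

/-- One step of the accelerated deterministic sampler:
`Y_{t-1} = Ψ_t(Y_t, Φ_t(Y_t)) = (1/√α_t) • ψ_t(Y_t)`. -/
def odeStep (T : ℕ) (c0 c1 : ℝ) (s : ℕ → Vec d → Vec d) (t : ℕ) (x : Vec d) : Vec d :=
  (Real.sqrt (alpha T c0 c1 t))⁻¹ • psiMap T c0 c1 s t x

/-- Law of `Y_{T-k}` for the accelerated deterministic sampler started from `Y_T ~ N(0, I_d)`. -/
def odeLawAux (d T : ℕ) (c0 c1 : ℝ) (s : ℕ → Vec d → Vec d) : ℕ → Measure (Vec d)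
  | 0 => stdGaussian d
  | k + 1 => Measure.map (odeStep T c0 c1 s (T - k)) (odeLawAux d T c0 c1 s k)

/-- Law `p_t` of `Y_t` for the accelerated deterministic sampler. -/
def odeLaw (d T : ℕ) (c0 c1 : ℝ) (s : ℕ → Vec d → Vec d) (t : ℕ) : Measure (Vec d) :=
  odeLawAux d T c0 c1 s (T - t)

/-- Deterministic trajectory `y_{T-k}` of the accelerated ODE sampler started at `yT`. -/
def odeSeqAux (d T : ℕ) (c0 c1 : ℝ) (s : ℕ → Vec d → Vec d) (yT : Vec d) : ℕ → Vec d
  | 0 => yT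
  | k + 1 => odeStep T c0 c1 s (T - k) (odeSeqAux d T c0 c1 s yT k)

/-- The point `y_t` of the deterministic trajectory started at `yT`. -/
def odeSeq (d T : ℕ) (c0 c1 : ℝ) (s : ℕ → Vec d → Vec d) (yT : Vec d) (t : ℕ) : Vec d :=
  odeSeqAux d T c0 c1 s yT (T - t)

/-- One step of the accelerated stochastic sampler:
`Y_{t-1} = (1/√α_t) • (Y_t⁺ + (1-α_t) s_t(Y_t⁺) + √((1-α_t)/2) Z_t⁺)` where
`Y_t⁺ = Y_t + √((1-α_t)/2) Z_t`. -/
def sdeStep (T : ℕ) (c0 c1 : ℝ) (s : ℕ → Vec d → Vec d) (t : ℕ) (x z zp : Vec d) : Vec d :=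
  (Real.sqrt (alpha T c0 c1 t))⁻¹ •
    (x + Real.sqrt ((1 - alpha T c0 c1 t) / 2) • z +
      (1 - alpha T c0 c1 t) • s t (x + Real.sqrt ((1 - alpha T c0 c1 t) / 2) • z) +
        Real.sqrt ((1 - alpha T c0 c1 t) / 2) • zp)

/-- Law of `Y_{T-k}` for the accelerated stochastic sampler started from `Y_T ~ N(0, I_d)`. -/
def sdeLawAux (d T : ℕ) (c0 c1 : ℝ) (s : ℕ → Vec d → Vec d) : ℕ → Measure (Vec d)
  | 0 => stdGaussian d
  | k + 1 => Measure.map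
      (fun p : Vec d × Vec d × Vec d => sdeStep T c0 c1 s (T - k) p.1 p.2.1 p.2.2)
      ((sdeLawAux d T c0 c1 s k).prod ((stdGaussian d).prod (stdGaussian d)))

/-- Law `p_t` of `Y_t` for the accelerated stochastic sampler. -/
def sdeLaw (d T : ℕ) (c0 c1 : ℝ) (s : ℕ → Vec d → Vec d) (t : ℕ) : Measure (Vec d) :=
  sdeLawAux d T c0 c1 s (T - t)

/-- Pointwise score estimation error `ε_{score,t}(x) = ‖s_t(x) - s_t⋆(x)‖₂`. -/
def epsScore (T : ℕ) (c0 c1 : ℝ) (pdata : Vec d → ℝ) (s : ℕ → Vec d → Vec d)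
    (t : ℕ) (x : Vec d) : ℝ :=
  ‖s t x - scoreFun pdata (alphaBar T c0 c1 t) x‖

/-- Pointwise Jacobian estimation error `ε_{Jacobi,t}(x) = ‖J_{s_t}(x) - J_{s_t⋆}(x)‖`. -/
def epsJacobi (T : ℕ) (c0 c1 : ℝ) (pdata : Vec d → ℝ) (s : ℕ → Vec d → Vec d)
    (t : ℕ) (x : Vec d) : ℝ :=
  ‖fderiv ℝ (s t) x - fderiv ℝ (scoreFun pdata (alphaBar T c0 c1 t)) x‖

/-- `θ(y) = max{-log q_t(y)/(d log T), c₆}`. -/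
def thetaY (T : ℕ) (c0 c1 c6 : ℝ) (pdata : Vec d → ℝ) (t : ℕ) (y : Vec d) : ℝ :=
  max (-(Real.log (qFun pdata (alphaBar T c0 c1 t) y)) / ((d : ℝ) * Real.log T)) c6

/-- `A_t(x)`. -/
def AtQ (pdata : Vec d → ℝ) (a : ℝ) (x : Vec d) : ℝ :=
  (1 - a)⁻¹ * ∫ x0, condPdf pdata a x0 x * ‖x - Real.sqrt a • x0‖ ^ 2

/-- `B_t(x)`. -/
def BtQ (pdata : Vec d → ℝ) (a : ℝ) (x : Vec d) : ℝ :=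
  (1 - a)⁻¹ * ‖∫ x0, condPdf pdata a x0 x • (x - Real.sqrt a • x0)‖ ^ 2

/-- `C_t(x)`. -/
def CtQ (pdata : Vec d → ℝ) (a : ℝ) (x : Vec d) : ℝ :=
  ((1 - a) ^ 2)⁻¹ * ∫ x0, condPdf pdata a x0 x * ‖x - Real.sqrt a • x0‖ ^ 4

/-- `D_t(x)`. -/
def DtQ (pdata : Vec d → ℝ) (a : ℝ) (x : Vec d) : ℝ :=
  ((1 - a) ^ 2)⁻¹ * ∫ x0, condPdf pdata a x0 x * ⟪gFun pdata a x, x - Real.sqrt a • x0⟫ ^ 2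

/-- `E_t(x)`. -/
def EtQ (pdata : Vec d → ℝ) (a : ℝ) (x : Vec d) : ℝ :=
  ((1 - a) ^ 2)⁻¹ * ∫ x0, condPdf pdata a x0 x *
    (‖x - Real.sqrt a • x0‖ ^ 2 * ⟪gFun pdata a x, x - Real.sqrt a • x0⟫)

/-- The main (estimation-error-free) term appearing in the density-ratio expansions
of Lemma 6 (eqns (xt) and (yt)). -/
def mainTerm (d T : ℕ) (c0 c1 : ℝ) (pdata : Vec d → ℝ) (t : ℕ) (x : Vec d) : ℝ :=
  1 + (1 - alpha T c0 c1 t) *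
        ((d : ℝ) + BtQ pdata (alphaBar T c0 c1 t) x - AtQ pdata (alphaBar T c0 c1 t) x) /
        (2 * (1 - alphaBar T c0 c1 t)) +
    (1 - alpha T c0 c1 t) ^ 2 / (8 * (1 - alphaBar T c0 c1 t) ^ 2) *
      ((d : ℝ) * ((d : ℝ) + 2) +
        (4 + 2 * (d : ℝ)) *
          (BtQ pdata (alphaBar T c0 c1 t) x - AtQ pdata (alphaBar T c0 c1 t) x) -
        BtQ pdata (alphaBar T c0 c1 t) x ^ 2 + CtQ pdata (alphaBar T c0 c1 t) x +
        2 * DtQ pdata (alphaBar T c0 c1 t) x - 3 * EtQ pdata (alphaBar T c0 c1 t) x +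
        AtQ pdata (alphaBar T c0 c1 t) x * BtQ pdata (alphaBar T c0 c1 t) x)

/-- `μ̂_t⋆(x) = (1/√α_t)(x + (1-α_t) s_t⋆(x))`, with `al = α_t` and `a = ᾱ_t`. -/
def muHatStar (pdata : Vec d → ℝ) (al a : ℝ) (x : Vec d) : Vec d :=
  (Real.sqrt al)⁻¹ • (x + (1 - al) • scoreFun pdata a x)

/-- Conditional law of `H_{t-1}` given `H_t = x` for the auxiliary process
`H_{t-1} = μ̂_t⋆(H_t) + √((1-α_t)/(2α_t)) (Z_t - ((1-α_t)/(1-ᾱ_t)) J_t(H_t) Z_t + Z_t⁺)`. -/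
def auxKernel (d T : ℕ) (c0 c1 : ℝ) (pdata : Vec d → ℝ) (t : ℕ) (x : Vec d) :
    Measure (Vec d) :=
  Measure.map
    (fun p : Vec d × Vec d =>
      muHatStar pdata (alpha T c0 c1 t) (alphaBar T c0 c1 t) x +
        Real.sqrt ((1 - alpha T c0 c1 t) / (2 * alpha T c0 c1 t)) •
          (p.1 -
            ((1 - alpha T c0 c1 t) / (1 - alphaBar T c0 c1 t)) •
              (Jmat pdata (alphaBar T c0 c1 t) x) p.1 +
            p.2))
    ((stdGaussian d).prod (stdGaussian d))

/-- Conditional law of `Y_{t-1}` given `Y_t = x` for the accelerated stochastic sampler. -/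
def sdeKernel (d T : ℕ) (c0 c1 : ℝ) (s : ℕ → Vec d → Vec d) (t : ℕ) (x : Vec d) :
    Measure (Vec d) :=
  Measure.map (fun p : Vec d × Vec d => sdeStep T c0 c1 s t x p.1 p.2)
    ((stdGaussian d).prod (stdGaussian d))

/-- Reverse conditional density `p_{X_{t-1}|X_t}(x'|x)` of the forward chain. -/
def pRev (d T : ℕ) (c0 c1 : ℝ) (pdata : Vec d → ℝ) (t : ℕ) (xprev x : Vec d) : ℝ :=
  qFun pdata (alphaBar T c0 c1 (t - 1)) xprev *
      gaussPdf d (1 - alpha T c0 c1 t) (x - Real.sqrt (alpha T c0 c1 t) • xprev) /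
    qFun pdata (alphaBar T c0 c1 t) x

end Paper

namespace Paper

section Aux
variable {T : ℕ} (hT : 16 ≤ T)
include hT

lemma aux_T_pos : (0:ℝ) < T := by
  have : (16:ℝ) ≤ T := by exact_mod_cast hT
  linarith

lemma aux_one_le_log : 1 ≤ Real.log T := by
  have h1 : Real.exp 1 ≤ (T:ℝ) := by
    have : (16:ℝ) ≤ T := by exact_mod_cast hT
    have := Real.exp_one_lt_d9
    linarith
  calc (1:ℝ) = Real.log (Real.exp 1) := (Real.log_exp 1).symm
    _ ≤ Real.log T := Real.log_le_log (Real.exp_pos 1) h1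

lemma aux_L_le_half : Real.log T / T ≤ 1/2 := by
  have hT0 := aux_T_pos hT
  have hs : (4:ℝ) ≤ Real.sqrt T := by
    rw [show (4:ℝ) = Real.sqrt 16 by
      rw [show (16:ℝ) = 4^2 by norm_num, Real.sqrt_sq (by norm_num)]]
    exact Real.sqrt_le_sqrt (by exact_mod_cast hT)
  have h1 : Real.log T / 2 ≤ Real.sqrt T - 1 := by
    have := Real.log_le_sub_one_of_pos (Real.sqrt_pos.mpr hT0)
    rwa [Real.log_sqrt hT0.le] at this
  have h2 : Real.sqrt T * Real.sqrt T = (T:ℝ) := Real.mul_self_sqrt hT0.le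
  rw [div_le_iff₀ hT0]
  nlinarith [h1, h2, hs]

lemma aux_L_pos : 0 < Real.log T / T :=
  div_pos (lt_of_lt_of_le one_pos (aux_one_le_log hT)) (aux_T_pos hT)

omit hT in
lemma beta_one_eq : beta T 1 1 1 = 1 / T := by
  simp [beta, Real.rpow_one]

omit hT in
lemma beta_ge_two_eq {t : ℕ} (ht : 2 ≤ t) :
    beta T 1 1 t = Real.log T / T * min (1 / T * (1 + Real.log T / T) ^ t) 1 := by
  rw [beta, if_neg (by omega)]
  norm_num [Real.rpow_one]

lemma beta_pos {t : ℕ} (ht : 1 ≤ t) : 0 < beta T 1 1 t := by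
  have hT0 := aux_T_pos hT
  have hL := aux_L_pos hT
  rcases eq_or_lt_of_le ht with h | h
  · rw [← h, beta_one_eq]; positivity
  · rw [beta_ge_two_eq (by omega)]
    have h1 : (0:ℝ) < 1 / T * (1 + Real.log T / T) ^ t := by positivity
    exact mul_pos hL (lt_min h1 one_pos)

lemma beta_le_L {t : ℕ} (ht : 1 ≤ t) : beta T 1 1 t ≤ Real.log T / T := by
  have hT0 := aux_T_pos hT
  rcases eq_or_lt_of_le ht with h | h
  · rw [← h, beta_one_eq]
    have h1 := aux_one_le_log hT
    gcongr
  · rw [beta_ge_two_eq (by omega)]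
    calc Real.log T / T * min (1 / T * (1 + Real.log T / T) ^ t) 1
        ≤ Real.log T / T * 1 := by
          exact mul_le_mul_of_nonneg_left (min_le_right _ _) (aux_L_pos hT).le
      _ = Real.log T / T := mul_one _

lemma alpha_ge {t : ℕ} (ht : 1 ≤ t) : 1 - Real.log T / T ≤ alpha T 1 1 t := by
  have := beta_le_L hT ht; unfold alpha; linarith

lemma alpha_lt_one {t : ℕ} (ht : 1 ≤ t) : alpha T 1 1 t < 1 := by
  have := beta_pos hT ht; unfold alpha; linarith

lemma alpha_ge_half {t : ℕ} (ht : 1 ≤ t) : (1:ℝ)/2 ≤ alpha T 1 1 t := by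
  have h1 := alpha_ge hT ht
  have h2 := aux_L_le_half hT
  linarith

omit hT in
lemma alphaBar_succ (t : ℕ) :
    alphaBar T 1 1 (t+1) = alphaBar T 1 1 t * alpha T 1 1 (t+1) :=
  Finset.prod_Icc_succ_top (by omega) _

lemma alphaBar_pos (t : ℕ) : 0 < alphaBar T 1 1 t := by
  refine Finset.prod_pos fun k hk => ?_
  have := alpha_ge_half hT (Finset.mem_Icc.mp hk).1
  linarith

lemma alphaBar_le_one (t : ℕ) : alphaBar T 1 1 t ≤ 1 := by
  induction t with
  | zero => simp [alphaBar]
  | succ n ih =>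
    rw [alphaBar_succ]
    have h1 := alphaBar_pos hT n
    have h2 := alpha_lt_one hT (t := n+1) (by omega)
    have h3 := alpha_ge_half hT (t := n+1) (by omega)
    nlinarith

lemma alphaBar_lt_one {t : ℕ} (ht : 1 ≤ t) : alphaBar T 1 1 t < 1 := by
  induction t with
  | zero => omega
  | succ n ih =>
    rw [alphaBar_succ]
    have h1 := alphaBar_pos hT n
    have h2 := alphaBar_le_one hT n
    have h3 := alpha_lt_one hT (t := n+1) (by omega)
    have h4 := alpha_ge_half hT (t := n+1) (by omega)
    nlinarith

/-- Key estimate: `min(β₁(1+L)^{t+1}, 1) ≤ 4 (1 - ᾱ_t)`. -/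
lemma key {t : ℕ} (ht : 1 ≤ t) :
    min (1 / T * (1 + Real.log T / T) ^ (t+1)) 1 ≤ 4 * (1 - alphaBar T 1 1 t) := by
  have hT0 := aux_T_pos hT
  have hL := aux_L_pos hT
  have hL2 := aux_L_le_half hT
  set L := Real.log T / T with hLdef
  induction t with
  | zero => omega
  | succ n ih =>
    rcases Nat.eq_or_lt_of_le ht with h | h
    · -- base case t = 1
      have hbar : alphaBar T 1 1 1 = 1 - 1/T := by
        simp [alphaBar, alpha, beta_one_eq, one_div]
      rw [← h, hbar]
      have h1 : min (1 / T * (1 + L) ^ (1+1)) 1 ≤ 1 / T * (1 + L)^2 := min_le_left _ _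
      have h2 : (1 + L)^2 ≤ 4 := by nlinarith
      have h3 : (0:ℝ) < 1/T := by positivity
      nlinarith
    · -- inductive step, n ≥ 1
      have hn : 1 ≤ n := by omega
      have ihn := ih hn
      have hbeta : beta T 1 1 (n+1) = L * min (1 / T * (1 + L) ^ (n+1)) 1 :=
        beta_ge_two_eq (by omega)
      have hrec := alphaBar_succ (T := T) n
      set N := min (1 / T * (1 + L) ^ (n+1)) 1 with hN
      have hN0 : 0 ≤ N := le_min (by positivity) one_pos.le
      have hN1 : N ≤ 1 := min_le_right _ _
      have hstep : min (1 / T * (1 + L) ^ (n+1+1)) 1 ≤ (1 + L) * N := by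
        have e1 : 1 / T * (1 + L) ^ (n+1+1) = (1 + L) * (1 / T * (1 + L) ^ (n+1)) := by
          ring
        have e2 : (1 + L) * N = min ((1 + L) * (1 / T * (1 + L) ^ (n+1))) ((1 + L) * 1) := by
          rw [hN, mul_min_of_nonneg _ _ (by linarith : (0:ℝ) ≤ 1 + L)]
        rw [e1, e2]
        exact min_le_min le_rfl (by linarith)
      have hbar0 : alphaBar T 1 1 n ≤ 1 := alphaBar_le_one hT n
      have halpha : alpha T 1 1 (n+1) = 1 - L * N := by
        rw [alpha, hbeta]
      have : 1 - alphaBar T 1 1 (n+1) = L * N + (1 - L * N) * (1 - alphaBar T 1 1 n) := by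
        rw [hrec, halpha]; ring
      rw [this]
      have hLN : L * N ≤ 1 := by nlinarith
      calc min (1 / T * (1 + L) ^ (n+1+1)) 1 ≤ (1 + L) * N := hstep
        _ ≤ 4 * (L * N + (1 - L * N) * (1 - alphaBar T 1 1 n)) := by
            nlinarith [mul_nonneg (by nlinarith : (0:ℝ) ≤ 1 - L*N)
                (by linarith [hN0] : (0:ℝ) ≤ 4*(1 - alphaBar T 1 1 n) - N),
              mul_nonneg (mul_nonneg hL.le hN0) (by linarith : (0:ℝ) ≤ 3 - N)]
end Aux

/-- learning-rate properties (39), part 1: for all large enough `T`,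
(i) `α_t ≥ 1 - c₁ log T / T ≥ 1/2` for `1 ≤ t ≤ T`;
(ii) `½ (1-α_t)/(1-ᾱ_t) ≤ ½ (1-α_t)/(α_t-ᾱ_t) ≤ (1-α_t)/(1-ᾱ_{t-1}) ≤ 4c₁ log T / T`
for `2 ≤ t ≤ T`;
(iii) `1 ≤ (1-ᾱ_t)/(1-ᾱ_{t-1}) ≤ 1 + 4c₁ log T / T` for `2 ≤ t ≤ T`. -/
theorem learning_rate_properties :
    ∃ c0 c1 : ℝ, 0 < c0 ∧ 0 < c1 ∧
      ∃ T0 : ℕ, ∀ T : ℕ, T0 ≤ T →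
        (∀ t : ℕ, 1 ≤ t → t ≤ T →
            1 - c1 * Real.log T / T ≤ alpha T c0 c1 t ∧
              (1 : ℝ) / 2 ≤ 1 - c1 * Real.log T / T) ∧
          (∀ t : ℕ, 2 ≤ t → t ≤ T →
            (1 / 2) * ((1 - alpha T c0 c1 t) / (1 - alphaBar T c0 c1 t)) ≤
                (1 / 2) * ((1 - alpha T c0 c1 t) / (alpha T c0 c1 t - alphaBar T c0 c1 t)) ∧
              (1 / 2) * ((1 - alpha T c0 c1 t) / (alpha T c0 c1 t - alphaBar T c0 c1 t)) ≤
                (1 - alpha T c0 c1 t) / (1 - alphaBar T c0 c1 (t - 1)) ∧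
              (1 - alpha T c0 c1 t) / (1 - alphaBar T c0 c1 (t - 1)) ≤
                4 * c1 * Real.log T / T) ∧
          (∀ t : ℕ, 2 ≤ t → t ≤ T →
            1 ≤ (1 - alphaBar T c0 c1 t) / (1 - alphaBar T c0 c1 (t - 1)) ∧
              (1 - alphaBar T c0 c1 t) / (1 - alphaBar T c0 c1 (t - 1)) ≤
                1 + 4 * c1 * Real.log T / T) := by
  refine ⟨1, 1, one_pos, one_pos, 16, fun T hT => ?_⟩
  have hT0 := aux_T_pos hT
  have hL : 0 < Real.log T / T := aux_L_pos hT
  have hL2 : Real.log T / T ≤ 1/2 := aux_L_le_half hT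
  refine ⟨fun t ht htT => ?_, fun t ht htT => ?_, fun t ht htT => ?_⟩
  · constructor
    · have := alpha_ge hT ht
      have e : 1 * Real.log T / T = Real.log T / T := by ring
      rw [e]; exact this
    · have e : 1 * Real.log T / T = Real.log T / T := by ring
      rw [e]; linarith
  · obtain ⟨u, rfl⟩ : ∃ u, t = u + 1 := ⟨t - 1, by omega⟩
    have hu : 1 ≤ u := by omega
    have ht1 : u + 1 - 1 = u := by omega
    rw [ht1]
    set L := Real.log T / T with hLdef
    set N := min (1 / (T:ℝ) * (1 + L) ^ (u+1)) 1 with hN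
    have hb : beta T 1 1 (u+1) = L * N := beta_ge_two_eq (by omega)
    have hβ : 1 - alpha T 1 1 (u+1) = L * N := by rw [alpha, hb]; ring
    have hN0 : 0 ≤ N := le_min (by positivity) one_pos.le
    have hβ0 : 0 ≤ L * N := mul_nonneg hL.le hN0
    have hβ0' : 0 ≤ 1 - alpha T 1 1 (u+1) := by rw [hβ]; exact hβ0
    have hX : 0 < 1 - alphaBar T 1 1 u := by
      have := alphaBar_lt_one hT hu; linarith
    have hA : alphaBar T 1 1 (u+1) = alphaBar T 1 1 u * alpha T 1 1 (u+1) :=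
      alphaBar_succ u
    have hkey : N ≤ 4 * (1 - alphaBar T 1 1 u) := key hT hu
    have hα : (1:ℝ)/2 ≤ alpha T 1 1 (u+1) := alpha_ge_half hT (by omega)
    have hα1 : alpha T 1 1 (u+1) < 1 := alpha_lt_one hT (by omega)
    have hD : alpha T 1 1 (u+1) - alphaBar T 1 1 (u+1)
        = alpha T 1 1 (u+1) * (1 - alphaBar T 1 1 u) := by rw [hA]; ring
    have hD0 : 0 < alpha T 1 1 (u+1) - alphaBar T 1 1 (u+1) := by
      rw [hD]; nlinarith
    refine ⟨?_, ?_, ?_⟩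
    · have h1 : alpha T 1 1 (u+1) - alphaBar T 1 1 (u+1) ≤ 1 - alphaBar T 1 1 (u+1) := by
        linarith
      have := div_le_div_of_nonneg_left hβ0' hD0 h1
      linarith
    · have h2X : 1 - alphaBar T 1 1 u ≤
          2 * (alpha T 1 1 (u+1) - alphaBar T 1 1 (u+1)) := by
        rw [hD]; nlinarith
      have h3 := div_le_div_of_nonneg_left hβ0' hX h2X
      calc (1/2) * ((1 - alpha T 1 1 (u+1)) / (alpha T 1 1 (u+1) - alphaBar T 1 1 (u+1)))
          = (1 - alpha T 1 1 (u+1)) / (2 * (alpha T 1 1 (u+1) - alphaBar T 1 1 (u+1))) := by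
            rw [div_mul_div_comm, one_mul]
        _ ≤ (1 - alpha T 1 1 (u+1)) / (1 - alphaBar T 1 1 u) := h3
    · rw [hβ, div_le_iff₀ hX]
      have e : 4 * 1 * Real.log T / T = 4 * L := by rw [hLdef]; ring
      rw [e]
      nlinarith
  · obtain ⟨u, rfl⟩ : ∃ u, t = u + 1 := ⟨t - 1, by omega⟩
    have hu : 1 ≤ u := by omega
    have ht1 : u + 1 - 1 = u := by omega
    rw [ht1]
    set L := Real.log T / T with hLdef
    set N := min (1 / (T:ℝ) * (1 + L) ^ (u+1)) 1 with hN
    have hb : beta T 1 1 (u+1) = L * N := beta_ge_two_eq (by omega)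
    have hN0 : 0 ≤ N := le_min (by positivity) one_pos.le
    have hX : 0 < 1 - alphaBar T 1 1 u := by
      have := alphaBar_lt_one hT hu; linarith
    have hA : alphaBar T 1 1 (u+1) = alphaBar T 1 1 u * alpha T 1 1 (u+1) :=
      alphaBar_succ u
    have hkey : N ≤ 4 * (1 - alphaBar T 1 1 u) := key hT hu
    have hα1 : alpha T 1 1 (u+1) < 1 := alpha_lt_one hT (by omega)
    have hαe : alpha T 1 1 (u+1) = 1 - L * N := by rw [alpha, hb]
    have hbar0 : 0 < alphaBar T 1 1 u := alphaBar_pos hT u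
    constructor
    · rw [le_div_iff₀ hX]
      nlinarith
    · rw [div_le_iff₀ hX]
      have e : (1 + 4 * 1 * Real.log T / T) = 1 + 4 * L := by rw [hLdef]; ring
      rw [e, hA, hαe]
      nlinarith


end Paper
end
end

section
/- Suppose P(‖X_0‖₂ ≤ R) = 1 with R = T^{c_R}. Fix 1 ≤ t ≤ T and y ∈ ℝ^d, and set θ(y) := max{ −log q_t(y)/(d log T), c_6 } for a large enough constant c_6 ≥ 2c_R + c_0. Then the conditional moments of ‖√ᾱ_t X_0 − y‖₂ given X_t = y satisfy: E[‖√ᾱ_t X_0 − y‖₂ | X_t = y] ≤ 12·√(θ(y) d (1−ᾱ_t) log T); E[‖√ᾱ_t X_0 − y‖₂² | X_t = y] ≤ 120·θ(y) d (1−ᾱ_t) log T; E[‖√ᾱ_t X_0 − y‖₂³ | X_t = y] ≤ 1040·(θ(y) d (1−ᾱ_t) log T)^{3/2}; and E[‖√ᾱ_t X_0 − y‖₂⁴ | X_t = y] ≤ 10080·(θ(y) d (1−ᾱ_t) log T)². -/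
/-!
Formalization setup for "Accelerating Convergence of Score-Based Diffusion Models, Provably".

We work on `ℝ^d = EuclideanSpace ℝ (Fin d)`.  The data distribution is described by a
Lebesgue density `pdata`.  The forward process is `X_t = √ᾱ_t • X₀ + √(1-ᾱ_t) • W̄_t`,
whose density `q_t` is given by the explicit Gaussian convolution formula.  Samplers are
described as laws (measures) obtained by pushing the standard Gaussian `N(0, I_d)` through
the corresponding update maps.
-/

open MeasureTheory Real Filter
open scoped ENNReal NNReal BigOperators RealInnerProductSpace Topology

noncomputable section

namespace Paper

lemma aux_xexp {x : ℝ} (hx : 0 ≤ x) : x * Real.exp (-x) ≤ 1 := by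
  have h : x ≤ Real.exp x := by linarith [Real.add_one_le_exp x]
  calc x * Real.exp (-x) ≤ Real.exp x * Real.exp (-x) :=
        mul_le_mul_of_nonneg_right h (Real.exp_pos _).le
    _ = 1 := by rw [← Real.exp_add]; simp

lemma aux_pow_exp {k : ℕ} (hk : 1 ≤ k) {s c : ℝ} (hs : 0 ≤ s) (hc : 0 < c) :
    s ^ k * Real.exp (-s ^ 2 / (4 * c)) ≤ Real.sqrt (2 * k * c) ^ k := by
  have hk0 : (k : ℝ) ≠ 0 := Nat.cast_ne_zero.2 (by omega)
  have hkc : (0:ℝ) < 2 * k * c := by positivity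
  have hb : (0:ℝ) ≤ Real.sqrt (2 * k * c) ^ k := by positivity
  have hl : (0:ℝ) ≤ s ^ k * Real.exp (-s ^ 2 / (4 * c)) := by positivity
  have h1 : s ^ 2 * Real.exp (-(s ^ 2 / (2 * k * c))) ≤ 2 * k * c := by
    have h2 := aux_xexp (x := s ^ 2 / (2 * k * c)) (by positivity)
    calc s ^ 2 * Real.exp (-(s ^ 2 / (2 * k * c)))
        = (2 * k * c) * (s ^ 2 / (2 * k * c) * Real.exp (-(s ^ 2 / (2 * k * c)))) := by
          field_simp
      _ ≤ (2 * k * c) * 1 := mul_le_mul_of_nonneg_left h2 hkc.le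
      _ = 2 * k * c := mul_one _
  have h3 : (s ^ k * Real.exp (-s ^ 2 / (4 * c))) ^ 2
      = (s ^ 2 * Real.exp (-(s ^ 2 / (2 * k * c)))) ^ k := by
    rw [mul_pow, mul_pow, ← pow_mul, ← pow_mul, ← Real.exp_nat_mul, ← Real.exp_nat_mul,
      mul_comm k 2]
    congr 1
    field_simp
    ring
  have hsq : (s ^ k * Real.exp (-s ^ 2 / (4 * c))) ^ 2 ≤ (Real.sqrt (2 * k * c) ^ k) ^ 2 := by
    rw [h3]
    calc (s ^ 2 * Real.exp (-(s ^ 2 / (2 * k * c)))) ^ k ≤ (2 * k * c) ^ k :=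
          pow_le_pow_left₀ (by positivity) h1 k
      _ = (Real.sqrt (2 * k * c) ^ k) ^ 2 := by
          rw [← pow_mul, mul_comm k 2, pow_mul, Real.sq_sqrt hkc.le]
  have h4 := Real.sqrt_le_sqrt hsq
  rwa [Real.sqrt_sq hl, Real.sqrt_sq hb] at h4

lemma gaussPdf_nonneg {d : ℕ} {v : ℝ} (hv : 0 ≤ v) (x : Vec d) : 0 ≤ gaussPdf d v x :=
  mul_nonneg (Real.rpow_nonneg (mul_nonneg (by positivity) hv) _) (Real.exp_pos _).le

lemma gaussPdf_le {d : ℕ} {v : ℝ} (hv : 0 < v) (x : Vec d) :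
    gaussPdf d v x ≤ (2 * π * v) ^ (-(d : ℝ) / 2) := by
  unfold gaussPdf
  have h1 : Real.exp (-‖x‖ ^ 2 / (2 * v)) ≤ 1 := by
    rw [Real.exp_le_one_iff]
    have h2 : (0:ℝ) ≤ ‖x‖ ^ 2 / (2 * v) := by positivity
    rw [neg_div]
    linarith
  calc (2 * π * v) ^ (-(d : ℝ) / 2) * Real.exp (-‖x‖ ^ 2 / (2 * v))
      ≤ (2 * π * v) ^ (-(d : ℝ) / 2) * 1 :=
        mul_le_mul_of_nonneg_left h1 (Real.rpow_nonneg (by positivity) _)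
    _ = _ := mul_one _

set_option maxHeartbeats 1000000 in
lemma master {d : ℕ} (k : ℕ) (hd : 1 ≤ d) (hk1 : 1 ≤ k) (hk4 : k ≤ 4)
    (pdata : Vec d → ℝ) (hm : Measurable pdata) (hnn : ∀ z, 0 ≤ pdata z)
    (h1 : (∫ z, pdata z) = 1)
    (sa v q θ lT : ℝ) (y : Vec d)
    (hv : 0 < v) (hvl : Real.exp (-lT) ≤ v)
    (hlT : 1/2 ≤ lT) (hθ : 2 ≤ θ)
    (hq : 0 < q)
    (hqdef : q = ∫ x0, pdata x0 * gaussPdf d v (y - sa • x0))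
    (hql : Real.exp (-(θ * d * lT)) ≤ q) :
    (∫ x0, pdata x0 * gaussPdf d v (y - sa • x0) / q * ‖sa • x0 - y‖ ^ k)
      ≤ 2 * Real.sqrt (8 * (θ * d * v * lT)) ^ k := by
  have hd1 : (1:ℝ) ≤ (d:ℝ) := by exact_mod_cast hd
  have hlT0 : 0 < lT := lt_of_lt_of_le (by norm_num) hlT
  have hθd : (2:ℝ) ≤ θ * d := by nlinarith
  have hθdlT : 1 ≤ θ * d * lT := by nlinarith
  set L : ℝ := θ * d * v * lT with hL
  have hL0 : 0 < L := by
    rw [hL]; exact mul_pos (mul_pos (mul_pos (by linarith) (by linarith)) hv) hlT0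
  set τ : ℝ := Real.sqrt (8 * L) with hτ
  have hτ0 : 0 ≤ τ := Real.sqrt_nonneg _
  set S : ℝ := (2 * π * v) ^ (-(d:ℝ) / 2) with hS
  have hS0 : 0 < S := Real.rpow_pos_of_pos (by positivity) _
  set B : ℝ := Real.sqrt (2 * k * v) ^ k with hB
  have hB0 : 0 ≤ B := by positivity
  set g : Vec d → ℝ := fun x0 => pdata x0 * gaussPdf d v (y - sa • x0) with hg
  set f : Vec d → ℝ := fun x0 => g x0 / q * ‖sa • x0 - y‖ ^ k with hf
  have hgnn : ∀ x0, 0 ≤ g x0 := fun x0 => mul_nonneg (hnn x0) (gaussPdf_nonneg hv.le _)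
  -- measurability
  have hgauss_cont : Continuous fun x0 : Vec d => gaussPdf d v (y - sa • x0) := by
    unfold gaussPdf
    exact continuous_const.mul (Real.continuous_exp.comp (by fun_prop))
  have hgm : Measurable g := hm.mul hgauss_cont.measurable
  have hnc : Continuous fun x0 : Vec d => ‖sa • x0 - y‖ ^ k := by fun_prop
  have hfm : Measurable f := (hgm.div_const q).mul hnc.measurable
  -- integrability
  have hpint : Integrable pdata := by
    by_contra hcon
    rw [integral_undef hcon] at h1
    norm_num at h1
  have hgle : ∀ x0, ‖g x0‖ ≤ S * pdata x0 := by
    intro x0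
    rw [Real.norm_eq_abs, abs_of_nonneg (hgnn x0)]
    calc pdata x0 * gaussPdf d v (y - sa • x0) ≤ pdata x0 * S :=
          mul_le_mul_of_nonneg_left (gaussPdf_le hv _) (hnn x0)
      _ = S * pdata x0 := mul_comm _ _
  have hgint : Integrable g :=
    (hpint.const_mul S).mono' hgm.aestronglyMeasurable (Filter.Eventually.of_forall hgle)
  -- pointwise value of f
  have hfval : ∀ x0, f x0 = pdata x0 * S *
      (‖sa • x0 - y‖ ^ k * Real.exp (-‖sa • x0 - y‖ ^ 2 / (2 * v))) / q := by
    intro x0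
    have hrev : ‖y - sa • x0‖ = ‖sa • x0 - y‖ := norm_sub_rev _ _
    simp only [hf, hg, gaussPdf, hrev, ← hS]
    ring
  have hexp_le : ∀ s : ℝ, 0 ≤ s → s ^ k * Real.exp (-s ^ 2 / (2 * v)) ≤ B := by
    intro s hs
    have hmono : -s ^ 2 / (2 * v) ≤ -s ^ 2 / (4 * v) := by
      rw [neg_div, neg_div, neg_le_neg_iff, div_le_div_iff₀ (by positivity) (by positivity)]
      nlinarith [sq_nonneg s]
    calc s ^ k * Real.exp (-s ^ 2 / (2 * v))
        ≤ s ^ k * Real.exp (-s ^ 2 / (4 * v)) :=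
          mul_le_mul_of_nonneg_left (Real.exp_le_exp.2 hmono) (pow_nonneg hs k)
      _ ≤ B := aux_pow_exp hk1 hs hv
  have hfnn : ∀ x0, 0 ≤ f x0 := fun x0 =>
    mul_nonneg (div_nonneg (hgnn x0) hq.le) (by positivity)
  have hfle : ∀ x0, ‖f x0‖ ≤ S * B / q * pdata x0 := by
    intro x0
    rw [Real.norm_eq_abs, abs_of_nonneg (hfnn x0), hfval x0]
    have hstep : pdata x0 * S * (‖sa • x0 - y‖ ^ k *
        Real.exp (-‖sa • x0 - y‖ ^ 2 / (2 * v))) ≤ pdata x0 * S * B :=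
      mul_le_mul_of_nonneg_left (hexp_le _ (norm_nonneg _)) (mul_nonneg (hnn x0) hS0.le)
    calc pdata x0 * S * (‖sa • x0 - y‖ ^ k *
          Real.exp (-‖sa • x0 - y‖ ^ 2 / (2 * v))) / q
        ≤ pdata x0 * S * B / q := by
          rw [div_eq_mul_inv, div_eq_mul_inv]
          exact mul_le_mul_of_nonneg_right hstep (inv_nonneg.2 hq.le)
      _ = S * B / q * pdata x0 := by ring
  have hfint : Integrable f :=
    (hpint.const_mul (S * B / q)).mono' hfm.aestronglyMeasurable
      (Filter.Eventually.of_forall hfle)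
  -- split into head and tail
  set A : Set (Vec d) := {x0 | ‖sa • x0 - y‖ ≤ τ} with hA
  have hAm : MeasurableSet A :=
    measurableSet_le (Continuous.measurable (by fun_prop)) measurable_const
  have hsplit : (∫ x0, f x0) = (∫ x0 in A, f x0) + ∫ x0 in Aᶜ, f x0 :=
    (integral_add_compl hAm hfint).symm
  -- head bound
  have hρint : Integrable (fun x0 => g x0 / q) := hgint.div_const q
  have hgq : (∫ x0, g x0) = q := by simp only [hg]; exact hqdef.symm
  have hρ1 : (∫ x0, g x0 / q) = 1 := by rw [integral_div, hgq, div_self hq.ne']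
  have hhead : (∫ x0 in A, f x0) ≤ τ ^ k := by
    calc (∫ x0 in A, f x0) ≤ ∫ x0 in A, g x0 / q * τ ^ k := by
          apply setIntegral_mono_on hfint.integrableOn
            ((hρint.mul_const _).integrableOn) hAm
          intro x0 hx0
          simp only [hA, Set.mem_setOf_eq] at hx0
          exact mul_le_mul_of_nonneg_left (pow_le_pow_left₀ (norm_nonneg _) hx0 k)
            (div_nonneg (hgnn x0) hq.le)
      _ = (∫ x0 in A, g x0 / q) * τ ^ k := integral_mul_const _ _
      _ ≤ 1 * τ ^ k := by
          apply mul_le_mul_of_nonneg_right _ (pow_nonneg hτ0 k)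
          rw [← hρ1]
          exact setIntegral_le_integral hρint
            (Filter.Eventually.of_forall fun x0 => div_nonneg (hgnn x0) hq.le)
      _ = τ ^ k := one_mul _
  -- tail bound
  set C : ℝ := S * B * Real.exp (-(τ ^ 2 / (4 * v))) * (1 / q) with hC
  have hC0 : 0 ≤ C := by
    apply mul_nonneg (mul_nonneg (mul_nonneg hS0.le hB0) (Real.exp_pos _).le)
    exact one_div_nonneg.2 hq.le
  have htail : (∫ x0 in Aᶜ, f x0) ≤ C := by
    calc (∫ x0 in Aᶜ, f x0) ≤ ∫ x0 in Aᶜ, C * pdata x0 := by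
          apply setIntegral_mono_on hfint.integrableOn
            ((hpint.const_mul C).integrableOn) hAm.compl
          intro x0 hx0
          simp only [hA, Set.mem_compl_iff, Set.mem_setOf_eq, not_le] at hx0
          have hsx : τ ≤ ‖sa • x0 - y‖ := hx0.le
          rw [hfval x0]
          have key : ‖sa • x0 - y‖ ^ k * Real.exp (-‖sa • x0 - y‖ ^ 2 / (2 * v))
              ≤ B * Real.exp (-(τ ^ 2 / (4 * v))) := by
            have e1 : Real.exp (-‖sa • x0 - y‖ ^ 2 / (2 * v))
                = Real.exp (-‖sa • x0 - y‖ ^ 2 / (4 * v)) *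
                  Real.exp (-‖sa • x0 - y‖ ^ 2 / (4 * v)) := by
              rw [← Real.exp_add]
              congr 1
              field_simp
              ring
            rw [e1, ← mul_assoc]
            apply mul_le_mul (aux_pow_exp hk1 (norm_nonneg _) hv) _
              (Real.exp_pos _).le hB0
            apply Real.exp_le_exp.2
            have hsq2 : τ ^ 2 ≤ ‖sa • x0 - y‖ ^ 2 := pow_le_pow_left₀ hτ0 hsx 2
            have h5 : τ ^ 2 / (4 * v) ≤ ‖sa • x0 - y‖ ^ 2 / (4 * v) := by
              rw [div_le_div_iff₀ (by positivity) (by positivity)]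
              nlinarith
            rw [neg_div]
            linarith
          calc pdata x0 * S * (‖sa • x0 - y‖ ^ k *
                Real.exp (-‖sa • x0 - y‖ ^ 2 / (2 * v))) / q
              ≤ pdata x0 * S * (B * Real.exp (-(τ ^ 2 / (4 * v)))) / q := by
                rw [div_eq_mul_inv, div_eq_mul_inv]
                exact mul_le_mul_of_nonneg_right
                  (mul_le_mul_of_nonneg_left key (mul_nonneg (hnn x0) hS0.le))
                  (inv_nonneg.2 hq.le)
            _ = C * pdata x0 := by rw [hC]; ring
      _ = C * ∫ x0 in Aᶜ, pdata x0 := integral_const_mul _ _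
      _ ≤ C * 1 := by
          apply mul_le_mul_of_nonneg_left _ hC0
          rw [← h1]
          exact setIntegral_le_integral hpint (Filter.Eventually.of_forall hnn)
      _ = C := mul_one _
  -- numeric bound for C
  have hτ2 : τ ^ 2 / (4 * v) = 2 * (θ * d * lT) := by
    rw [hτ, Real.sq_sqrt (by linarith : (0:ℝ) ≤ 8 * L), hL]
    field_simp
    ring
  have hSle : S ≤ Real.exp ((d:ℝ) * lT / 2) := by
    rw [hS, Real.rpow_def_of_pos (by positivity)]
    apply Real.exp_le_exp.2
    have hv2pi : v ≤ 2 * π * v := by nlinarith [Real.pi_gt_three]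
    have hlogv : -lT ≤ Real.log (2 * π * v) := by
      calc -lT = Real.log (Real.exp (-lT)) := (Real.log_exp _).symm
        _ ≤ Real.log (2 * π * v) := Real.log_le_log (Real.exp_pos _) (by linarith)
    calc Real.log (2 * π * v) * (-(d:ℝ) / 2)
        = ((d:ℝ) / 2) * (-Real.log (2 * π * v)) := by ring
      _ ≤ ((d:ℝ) / 2) * lT := mul_le_mul_of_nonneg_left (by linarith) (by positivity)
      _ = (d:ℝ) * lT / 2 := by ring
  have hqinv : 1 / q ≤ Real.exp (θ * d * lT) := by
    rw [div_le_iff₀ hq]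
    calc (1:ℝ) = Real.exp (θ * d * lT) * Real.exp (-(θ * d * lT)) := by
          rw [← Real.exp_add]; simp
      _ ≤ Real.exp (θ * d * lT) * q :=
          mul_le_mul_of_nonneg_left hql (Real.exp_pos _).le
  have h83 : Real.sqrt 8 ≤ 3 := by
    rw [show (3:ℝ) = Real.sqrt 9 by
      rw [show (9:ℝ) = 3 ^ 2 by norm_num, Real.sqrt_sq (by norm_num)]]
    exact Real.sqrt_le_sqrt (by norm_num)
  have hsk : B ≤ Real.sqrt 8 ^ k * Real.sqrt v ^ k := by
    rw [hB, ← mul_pow]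
    apply pow_le_pow_left₀ (Real.sqrt_nonneg _)
    rw [← Real.sqrt_mul (by norm_num : (0:ℝ) ≤ 8)]
    apply Real.sqrt_le_sqrt
    have hkr : (k:ℝ) ≤ 4 := by exact_mod_cast hk4
    nlinarith [mul_nonneg (by linarith : (0:ℝ) ≤ 8 - 2 * (k:ℝ)) hv.le]
  have honele : (1:ℝ) ≤ Real.sqrt (θ * d * lT) ^ k := by
    have h1' : (1:ℝ) ≤ Real.sqrt (θ * d * lT) := by
      have h6 := Real.sqrt_le_sqrt hθdlT
      rwa [Real.sqrt_one] at h6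
    calc (1:ℝ) = 1 ^ k := (one_pow k).symm
      _ ≤ _ := pow_le_pow_left₀ (by norm_num) h1' k
  have hexp_small : Real.exp ((d:ℝ) * lT / 2) * Real.exp (-(2 * (θ * d * lT))) *
      Real.exp (θ * d * lT) ≤ 1 := by
    rw [← Real.exp_add, ← Real.exp_add, Real.exp_le_one_iff]
    nlinarith [mul_nonneg (mul_nonneg (by linarith : (0:ℝ) ≤ θ - 1/2)
      (by linarith : (0:ℝ) ≤ (d:ℝ))) hlT0.le]
  have hτeq : τ = Real.sqrt 8 * Real.sqrt L := by
    rw [hτ, Real.sqrt_mul (by norm_num)]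
  have hLsplit : Real.sqrt L = Real.sqrt (θ * d * lT) * Real.sqrt v := by
    rw [show L = (θ * d * lT) * v by rw [hL]; ring,
      Real.sqrt_mul (by linarith)]
  have hCle : C ≤ τ ^ k := by
    calc C = S * B * Real.exp (-(2 * (θ * d * lT))) * (1 / q) := by rw [hC, hτ2]
      _ ≤ Real.exp ((d:ℝ) * lT / 2) * (Real.sqrt 8 ^ k * Real.sqrt v ^ k) *
            Real.exp (-(2 * (θ * d * lT))) * Real.exp (θ * d * lT) := by
          apply mul_le_mul _ hqinv (one_div_nonneg.2 hq.le) (by positivity)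
          apply mul_le_mul _ le_rfl (Real.exp_pos _).le (by positivity)
          exact mul_le_mul hSle hsk hB0 (Real.exp_pos _).le
      _ = (Real.exp ((d:ℝ) * lT / 2) * Real.exp (-(2 * (θ * d * lT))) *
            Real.exp (θ * d * lT)) * (Real.sqrt 8 ^ k * Real.sqrt v ^ k) := by ring
      _ ≤ 1 * (Real.sqrt 8 ^ k * Real.sqrt v ^ k) :=
          mul_le_mul_of_nonneg_right hexp_small (by positivity)
      _ = Real.sqrt 8 ^ k * Real.sqrt v ^ k := one_mul _
      _ ≤ Real.sqrt 8 ^ k * Real.sqrt v ^ k * Real.sqrt (θ * d * lT) ^ k :=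
          le_mul_of_one_le_right (by positivity) honele
      _ = τ ^ k := by rw [hτeq, hLsplit]; ring
  show (∫ x0, f x0) ≤ 2 * τ ^ k
  calc (∫ x0, f x0) = (∫ x0 in A, f x0) + ∫ x0 in Aᶜ, f x0 := hsplit
    _ ≤ τ ^ k + C := add_le_add hhead htail
    _ ≤ τ ^ k + τ ^ k := add_le_add le_rfl hCle
    _ = 2 * τ ^ k := by ring

end Paper
namespace Paper

set_option maxHeartbeats 2000000 in
/-- Lemma 3, conditional moments: under Assumption 1, with
`θ(y) = max{-log q_t(y)/(d log T), c₆}`, the first four conditional moments of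
`‖√ᾱ_t X₀ - y‖` given `X_t = y` are bounded by
`12 √(θ d (1-ᾱ_t) log T)`, `120 θ d (1-ᾱ_t) log T`, `1040 (θ d (1-ᾱ_t) log T)^{3/2}`,
and `10080 (θ d (1-ᾱ_t) log T)²` respectively. -/
theorem conditional_moment_bounds :
    ∃ c0 c1 c6min : ℝ, 0 < c0 ∧ 0 < c1 ∧ 0 < c6min ∧
      ∀ (T d : ℕ) (cR c6 : ℝ) (pdata : Vec d → ℝ) (t : ℕ) (y : Vec d),
        2 ≤ T → 1 ≤ d → 0 < cR →
        Measurable pdata → (∀ z, 0 ≤ pdata z) → (∫ z, pdata z) = 1 →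
        (∫ z in {w : Vec d | ‖w‖ ≤ (T : ℝ) ^ cR}, pdata z) = 1 →
        c6min ≤ c6 → 2 * cR + c0 ≤ c6 →
        1 ≤ t → t ≤ T →
        (∫ x0, condPdf pdata (alphaBar T c0 c1 t) x0 y *
              ‖Real.sqrt (alphaBar T c0 c1 t) • x0 - y‖) ≤
            12 * Real.sqrt (thetaY T c0 c1 c6 pdata t y * (d : ℝ) *
              (1 - alphaBar T c0 c1 t) * Real.log T) ∧
          (∫ x0, condPdf pdata (alphaBar T c0 c1 t) x0 y *
              ‖Real.sqrt (alphaBar T c0 c1 t) • x0 - y‖ ^ 2) ≤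
            120 * (thetaY T c0 c1 c6 pdata t y * (d : ℝ) *
              (1 - alphaBar T c0 c1 t) * Real.log T) ∧
          (∫ x0, condPdf pdata (alphaBar T c0 c1 t) x0 y *
              ‖Real.sqrt (alphaBar T c0 c1 t) • x0 - y‖ ^ 3) ≤
            1040 * (thetaY T c0 c1 c6 pdata t y * (d : ℝ) *
              (1 - alphaBar T c0 c1 t) * Real.log T) ^ ((3 : ℝ) / 2) ∧
          (∫ x0, condPdf pdata (alphaBar T c0 c1 t) x0 y *
              ‖Real.sqrt (alphaBar T c0 c1 t) • x0 - y‖ ^ 4) ≤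
            10080 * (thetaY T c0 c1 c6 pdata t y * (d : ℝ) *
              (1 - alphaBar T c0 c1 t) * Real.log T) ^ 2 := by
  refine ⟨1, 1, 2, one_pos, one_pos, two_pos, ?_⟩
  intro T d cR c6 pdata t y hT hd hcR hm hnn h1 _hsupp hc6 _hc6' ht1 htT
  have hd1 : (1:ℝ) ≤ (d:ℝ) := by exact_mod_cast hd
  have hT2 : (2:ℝ) ≤ (T:ℝ) := by exact_mod_cast hT
  have hTpos : (0:ℝ) < T := by linarith
  have hlT : 1/2 ≤ Real.log T := by
    have hsq : Real.exp ((1:ℝ)/2) ^ (2:ℕ) = Real.exp 1 := by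
      rw [← Real.exp_nat_mul]; norm_num
    have he : Real.exp ((1:ℝ)/2) ≤ 2 := by
      nlinarith [Real.exp_one_lt_d9, Real.exp_pos ((1:ℝ)/2), hsq]
    calc (1:ℝ)/2 = Real.log (Real.exp (1/2)) := (Real.log_exp _).symm
      _ ≤ Real.log 2 := Real.log_le_log (Real.exp_pos _) he
      _ ≤ Real.log T := Real.log_le_log (by norm_num) hT2
  have hlT0 : (0:ℝ) < Real.log T := by linarith
  have hlogT_le : Real.log T ≤ (T:ℝ) := by
    have := Real.log_le_sub_one_of_pos hTpos
    linarith
  -- schedule bounds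
  have hbeta : ∀ k : ℕ, 0 ≤ beta T 1 1 k ∧ beta T 1 1 k ≤ 1 := by
    intro k
    unfold beta
    split_ifs with hk
    · rw [Real.rpow_one]
      constructor
      · positivity
      · rw [div_le_one hTpos]; linarith
    · have hdivnn : (0:ℝ) ≤ 1 * Real.log T / T := div_nonneg (by linarith) hTpos.le
      have hm0 : (0:ℝ) ≤ 1 / (T:ℝ) ^ (1:ℝ) * (1 + 1 * Real.log T / T) ^ k := by
        apply mul_nonneg (by positivity)
        exact pow_nonneg (by linarith) k
      constructor
      · exact mul_nonneg hdivnn (le_min hm0 zero_le_one)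
      · calc 1 * Real.log T / T * min (1 / (T:ℝ) ^ (1:ℝ) * (1 + 1 * Real.log T / T) ^ k) 1
            ≤ 1 * Real.log T / T * 1 :=
              mul_le_mul_of_nonneg_left (min_le_right _ _) hdivnn
          _ = 1 * Real.log T / T := mul_one _
          _ ≤ 1 := by rw [div_le_one hTpos]; linarith
  have halpha : ∀ k : ℕ, 0 ≤ alpha T 1 1 k ∧ alpha T 1 1 k ≤ 1 := by
    intro k
    have hb := hbeta k
    unfold alpha
    constructor <;> linarith [hb.1, hb.2]
  have ha0 : 0 ≤ alphaBar T 1 1 t := by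
    unfold alphaBar
    exact Finset.prod_nonneg fun k _ => (halpha k).1
  have ha1 : alphaBar T 1 1 t ≤ 1 - 1/(T:ℝ) := by
    have h1mem : (1:ℕ) ∈ Finset.Icc 1 t := Finset.mem_Icc.2 ⟨le_refl 1, ht1⟩
    have halpha1 : alpha T 1 1 1 = 1 - 1/(T:ℝ) := by
      unfold alpha beta
      rw [if_pos le_rfl, Real.rpow_one]
    unfold alphaBar
    calc (∏ k ∈ Finset.Icc 1 t, alpha T 1 1 k)
        = alpha T 1 1 1 * ∏ k ∈ (Finset.Icc 1 t).erase 1, alpha T 1 1 k :=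
          (Finset.mul_prod_erase _ _ h1mem).symm
      _ ≤ alpha T 1 1 1 * 1 := mul_le_mul_of_nonneg_left
          (Finset.prod_le_one (fun k _ => (halpha k).1) (fun k _ => (halpha k).2))
          (halpha 1).1
      _ = 1 - 1/(T:ℝ) := by rw [halpha1, mul_one]
  have hv0' : Real.exp (-Real.log T) ≤ 1 - alphaBar T 1 1 t := by
    rw [Real.exp_neg, Real.exp_log hTpos, ← one_div]
    linarith
  have hv : (0:ℝ) < 1 - alphaBar T 1 1 t := lt_of_lt_of_le (Real.exp_pos _) hv0'
  have hθ2 : 2 ≤ thetaY T 1 1 c6 pdata t y := le_trans hc6 (le_max_right _ _)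
  have hq0 : 0 ≤ qFun pdata (alphaBar T 1 1 t) y := by
    have hqe : qFun pdata (alphaBar T 1 1 t) y = ∫ x0, pdata x0 *
        gaussPdf d (1 - alphaBar T 1 1 t) (y - Real.sqrt (alphaBar T 1 1 t) • x0) := rfl
    rw [hqe]
    exact integral_nonneg fun x0 => mul_nonneg (hnn x0) (gaussPdf_nonneg hv.le _)
  have hL0 : (0:ℝ) ≤ thetaY T 1 1 c6 pdata t y * d * (1 - alphaBar T 1 1 t) * Real.log T :=
    mul_nonneg (mul_nonneg (mul_nonneg (by linarith) (by linarith)) hv.le) (by linarith)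
  rcases eq_or_lt_of_le hq0 with hq | hq
  · -- degenerate case q = 0
    have hcond : ∀ x0, condPdf pdata (alphaBar T 1 1 t) x0 y = 0 := by
      intro x0
      unfold condPdf
      rw [← hq, div_zero]
    refine ⟨?_, ?_, ?_, ?_⟩
    · simp only [hcond, zero_mul, integral_zero]
      exact mul_nonneg (by norm_num) (Real.sqrt_nonneg _)
    · simp only [hcond, zero_mul, integral_zero]
      exact mul_nonneg (by norm_num) hL0
    · simp only [hcond, zero_mul, integral_zero]
      exact mul_nonneg (by norm_num) (Real.rpow_nonneg hL0 _)
    · simp only [hcond, zero_mul, integral_zero]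
      positivity
  · -- main case q > 0
    have hdlT : (0:ℝ) < (d:ℝ) * Real.log T := mul_pos (by linarith) hlT0
    have hql : Real.exp (-(thetaY T 1 1 c6 pdata t y * d * Real.log T))
        ≤ qFun pdata (alphaBar T 1 1 t) y := by
      have hlogq : -(Real.log (qFun pdata (alphaBar T 1 1 t) y)) / ((d:ℝ) * Real.log T)
          ≤ thetaY T 1 1 c6 pdata t y := le_max_left _ _
      have h8 : -(Real.log (qFun pdata (alphaBar T 1 1 t) y))
          ≤ thetaY T 1 1 c6 pdata t y * ((d:ℝ) * Real.log T) := (div_le_iff₀ hdlT).1 hlogq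
      have hassoc : thetaY T 1 1 c6 pdata t y * ((d:ℝ) * Real.log T)
          = thetaY T 1 1 c6 pdata t y * d * Real.log T := (mul_assoc _ _ _).symm
      have h9 : -(thetaY T 1 1 c6 pdata t y * d * Real.log T)
          ≤ Real.log (qFun pdata (alphaBar T 1 1 t) y) := by
        rw [← hassoc]; linarith
      calc Real.exp (-(thetaY T 1 1 c6 pdata t y * d * Real.log T))
          ≤ Real.exp (Real.log (qFun pdata (alphaBar T 1 1 t) y)) := Real.exp_le_exp.2 h9
        _ = qFun pdata (alphaBar T 1 1 t) y := Real.exp_log hq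
    have hmaster : ∀ (k : ℕ), 1 ≤ k → k ≤ 4 →
        (∫ x0, pdata x0 * gaussPdf d (1 - alphaBar T 1 1 t)
            (y - Real.sqrt (alphaBar T 1 1 t) • x0) / qFun pdata (alphaBar T 1 1 t) y *
            ‖Real.sqrt (alphaBar T 1 1 t) • x0 - y‖ ^ k)
          ≤ 2 * Real.sqrt (8 * (thetaY T 1 1 c6 pdata t y * d *
              (1 - alphaBar T 1 1 t) * Real.log T)) ^ k := by
      intro k hk1 hk4
      exact master k hd hk1 hk4 pdata hm hnn h1 (Real.sqrt (alphaBar T 1 1 t))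
        (1 - alphaBar T 1 1 t) (qFun pdata (alphaBar T 1 1 t) y)
        (thetaY T 1 1 c6 pdata t y) (Real.log T) y hv hv0' hlT hθ2 hq rfl hql
    have hLpos : (0:ℝ) < thetaY T 1 1 c6 pdata t y * d * (1 - alphaBar T 1 1 t) * Real.log T :=
      mul_pos (mul_pos (mul_pos (by linarith) (by linarith)) hv) hlT0
    set L : ℝ := thetaY T 1 1 c6 pdata t y * d * (1 - alphaBar T 1 1 t) * Real.log T with hLdef
    have h8L : Real.sqrt (8 * L) = Real.sqrt 8 * Real.sqrt L :=
      Real.sqrt_mul (by norm_num) _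
    have h83 : Real.sqrt 8 ≤ 3 := by
      rw [show (3:ℝ) = Real.sqrt 9 by
        rw [show (9:ℝ) = 3 ^ 2 by norm_num, Real.sqrt_sq (by norm_num)]]
      exact Real.sqrt_le_sqrt (by norm_num)
    have hs3 : Real.sqrt (8 * L) ≤ 3 * Real.sqrt L := by
      rw [h8L]
      exact mul_le_mul_of_nonneg_right h83 (Real.sqrt_nonneg L)
    refine ⟨?_, ?_, ?_, ?_⟩
    · -- first moment
      have h := hmaster 1 le_rfl (by norm_num)
      simp only [pow_one] at h
      simp only [condPdf]
      calc (∫ x0, pdata x0 * gaussPdf d (1 - alphaBar T 1 1 t)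
            (y - Real.sqrt (alphaBar T 1 1 t) • x0) / qFun pdata (alphaBar T 1 1 t) y *
            ‖Real.sqrt (alphaBar T 1 1 t) • x0 - y‖)
          ≤ 2 * Real.sqrt (8 * L) := h
        _ ≤ 12 * Real.sqrt L := by
            have := mul_le_mul_of_nonneg_left hs3 (by norm_num : (0:ℝ) ≤ 2)
            linarith [Real.sqrt_nonneg L]
    · -- second moment
      have h := hmaster 2 (by norm_num) (by norm_num)
      rw [Real.sq_sqrt (by linarith : (0:ℝ) ≤ 8 * L)] at h
      simp only [condPdf]
      calc (∫ x0, pdata x0 * gaussPdf d (1 - alphaBar T 1 1 t)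
            (y - Real.sqrt (alphaBar T 1 1 t) • x0) / qFun pdata (alphaBar T 1 1 t) y *
            ‖Real.sqrt (alphaBar T 1 1 t) • x0 - y‖ ^ 2)
          ≤ 2 * (8 * L) := h
        _ ≤ 120 * L := by linarith
    · -- third moment
      have h := hmaster 3 (by norm_num) (by norm_num)
      have hc3 : Real.sqrt (8 * L) ^ 3 = 8 * L * Real.sqrt (8 * L) := by
        rw [pow_succ, Real.sq_sqrt (by linarith : (0:ℝ) ≤ 8 * L)]
      rw [hc3] at h
      have hr32 : L ^ ((3:ℝ)/2) = L * Real.sqrt L := by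
        rw [show (3:ℝ)/2 = 1 + 1/2 by norm_num, Real.rpow_add hLpos, Real.rpow_one,
          ← Real.sqrt_eq_rpow]
      simp only [condPdf]
      rw [hr32]
      calc (∫ x0, pdata x0 * gaussPdf d (1 - alphaBar T 1 1 t)
            (y - Real.sqrt (alphaBar T 1 1 t) • x0) / qFun pdata (alphaBar T 1 1 t) y *
            ‖Real.sqrt (alphaBar T 1 1 t) • x0 - y‖ ^ 3)
          ≤ 2 * (8 * L * Real.sqrt (8 * L)) := h
        _ ≤ 2 * (8 * L * (3 * Real.sqrt L)) := by
            apply mul_le_mul_of_nonneg_left _ (by norm_num)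
            exact mul_le_mul_of_nonneg_left hs3 (by linarith)
        _ = 48 * (L * Real.sqrt L) := by ring
        _ ≤ 1040 * (L * Real.sqrt L) := by
            nlinarith [mul_nonneg hLpos.le (Real.sqrt_nonneg L)]
    · -- fourth moment
      have h := hmaster 4 (by norm_num) le_rfl
      have hc4 : Real.sqrt (8 * L) ^ 4 = (8 * L) ^ 2 := by
        rw [show (4:ℕ) = 2 * 2 from rfl, pow_mul, Real.sq_sqrt (by linarith : (0:ℝ) ≤ 8 * L)]
      rw [hc4] at h
      simp only [condPdf]
      calc (∫ x0, pdata x0 * gaussPdf d (1 - alphaBar T 1 1 t)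
            (y - Real.sqrt (alphaBar T 1 1 t) • x0) / qFun pdata (alphaBar T 1 1 t) y *
            ‖Real.sqrt (alphaBar T 1 1 t) • x0 - y‖ ^ 4)
          ≤ 2 * (8 * L) ^ 2 := h
        _ ≤ 10080 * L ^ 2 := by nlinarith [sq_nonneg L]

end Paper
end
end
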